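/- arXiv:1310.5456 — 4 statements merged into one kernel-verified Lean document; each statement's English description precedes it below -/
import Mathlib

section
/- Every tree admits a weakly k-uniform integer additive set-indexer for every positive integer k. -/
open Pointwise

/-- The induced edge labeling: the sumset of the labels of the endpoints. -/
def edgeSum {V : Type*} (f : V → Finset ℕ) : Sym2 V → Finset ℕ :=
  Sym2.lift ⟨fun u v => f u + f v, fun u v => by simp [add_comm]⟩

/-- An integer additive set-indexer: an injective labeling of the vertices by
finite nonempty sets of naturals whose induced edge labeling is injective on edges. -/
def IsIASI {V : Type*} (G : SimpleGraph V) (f : V → Finset ℕ) : Prop :=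
  Function.Injective f ∧ (∀ v, (f v).Nonempty) ∧
    ∀ e₁ ∈ G.edgeSet, ∀ e₂ ∈ G.edgeSet, edgeSum f e₁ = edgeSum f e₂ → e₁ = e₂

/-- A `k`-uniform IASI: every edge has set-indexing number `k`. -/
def IsUniformIASI {V : Type*} (G : SimpleGraph V) (f : V → Finset ℕ) (k : ℕ) : Prop :=
  IsIASI G f ∧ ∀ u v, G.Adj u v → (f u + f v).card = k

/-- A weakly `k`-uniform IASI: a `k`-uniform IASI assigning only singleton sets
and `k`-element sets to the vertices. -/
def IsWeaklyUniformIASI {V : Type*} (G : SimpleGraph V) (f : V → Finset ℕ) (k : ℕ) : Prop :=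
  IsUniformIASI G f k ∧ ∀ v, (f v).card = 1 ∨ (f v).card = k

/-!
A tree is bipartite, say with sides `s` and `t`. Number the vertices injectively by `idx < n`,
label `u ∈ s` by the singleton `{n * (idx u + 1)}` and every other vertex `v` by the interval
`[idx v, idx v + k)`. Every edge joins `u ∈ s` to `v ∉ s`, so its sumset is the interval of length
`k` starting at `n * (idx u + 1) + idx v`, and this number determines `idx u` and `idx v`
(quotient and remainder modulo `n`), hence the edge.
-/

open Finset

lemma Nat.eq_and_eq_of_add_mul_eq_add_mul {n i j i' j' : ℕ} (hj : j < n) (hj' : j' < n)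
    (h : j + n * i = j' + n * i') : i = i' ∧ j = j' := by
  have hn : 0 < n := by omega
  obtain ⟨hdiv, hmod⟩ := (Nat.div_mod_unique hn).2 ⟨h, hj⟩
  obtain ⟨hdiv', hmod'⟩ := (Nat.div_mod_unique hn).2 ⟨rfl, hj'⟩
  exact ⟨hdiv.symm.trans hdiv', hmod.symm.trans hmod'⟩

lemma Nat.Ico_add_injective {k : ℕ} (hk : 0 < k) : Function.Injective fun a => Ico a (a + k) := by
  intro a b h
  have h' := congrArg ((↑) : Finset ℕ → Set ℕ) h
  simp only [coe_Ico] at h'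
  exact ((Set.Ico_eq_Ico_iff (by omega)).1 h').1

lemma SimpleGraph.IsBipartiteWith.exists_eq_mk_of_mem_edgeSet {V : Type*} {G : SimpleGraph V}
    {s t : Set V} (h : G.IsBipartiteWith s t) {e : Sym2 V} (he : e ∈ G.edgeSet) :
    ∃ u ∈ s, ∃ v ∈ t, e = s(u, v) := by
  induction e using Sym2.ind with
  | _ u v =>
    rcases h.mem_of_adj he with ⟨hu, hv⟩ | ⟨hu, hv⟩
    · exact ⟨u, hu, v, hv, rfl⟩
    · exact ⟨v, hv, u, hu, Sym2.eq_swap⟩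

section BipartiteLabel

variable {V : Type*} (s : Set V) [DecidablePred (· ∈ s)] (idx : V → ℕ) (n k : ℕ) {u v : V}

def bipartiteLabel (v : V) : Finset ℕ :=
  if v ∈ s then {n * (idx v + 1)} else Ico (idx v) (idx v + k)

variable {s idx n k}

lemma bipartiteLabel_of_mem (hv : v ∈ s) : bipartiteLabel s idx n k v = {n * (idx v + 1)} :=
  if_pos hv

lemma bipartiteLabel_of_notMem (hv : v ∉ s) :
    bipartiteLabel s idx n k v = Ico (idx v) (idx v + k) :=
  if_neg hv

lemma card_bipartiteLabel (v : V) :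
    #(bipartiteLabel s idx n k v) = 1 ∨ #(bipartiteLabel s idx n k v) = k := by
  by_cases hv : v ∈ s
  · simp [bipartiteLabel_of_mem hv]
  · simp [bipartiteLabel_of_notMem hv]

lemma bipartiteLabel_nonempty (hk : 0 < k) (v : V) : (bipartiteLabel s idx n k v).Nonempty := by
  by_cases hv : v ∈ s
  · simp [bipartiteLabel_of_mem hv]
  · simp [bipartiteLabel_of_notMem hv, hk]

lemma bipartiteLabel_ne_of_mem_of_notMem (hn : ∀ v, idx v < n) (hk : 0 < k) (hu : u ∈ s)
    (hv : v ∉ s) : bipartiteLabel s idx n k u ≠ bipartiteLabel s idx n k v := by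
  rw [bipartiteLabel_of_mem hu, bipartiteLabel_of_notMem hv]
  intro h
  have hmem : idx v ∈ Ico (idx v) (idx v + k) := by simp [hk]
  rw [← h, mem_singleton] at hmem
  have := hn v
  nlinarith

lemma bipartiteLabel_injective (hidx : Function.Injective idx) (hn : ∀ v, idx v < n)
    (hk : 0 < k) : Function.Injective (bipartiteLabel s idx n k) := by
  intro u v h
  by_cases hu : u ∈ s <;> by_cases hv : v ∈ s
  · rw [bipartiteLabel_of_mem hu, bipartiteLabel_of_mem hv, singleton_inj] at h
    have hpos : 0 < n := (Nat.zero_le _).trans_lt (hn u)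
    exact hidx (Nat.succ_injective (Nat.eq_of_mul_eq_mul_left hpos h))
  · exact (bipartiteLabel_ne_of_mem_of_notMem hn hk hu hv h).elim
  · exact (bipartiteLabel_ne_of_mem_of_notMem hn hk hv hu h.symm).elim
  · rw [bipartiteLabel_of_notMem hu, bipartiteLabel_of_notMem hv] at h
    exact hidx (Nat.Ico_add_injective hk h)

lemma bipartiteLabel_add_bipartiteLabel (hu : u ∈ s) (hv : v ∉ s) :
    bipartiteLabel s idx n k u + bipartiteLabel s idx n k v =
      Ico (idx v + n * (idx u + 1)) (idx v + n * (idx u + 1) + k) := by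
  rw [bipartiteLabel_of_mem hu, bipartiteLabel_of_notMem hv]
  simp only [singleton_add, ← image_vadd, vadd_eq_add, image_add_left_Ico]
  congr 1 <;> ring

variable {G : SimpleGraph V} {t : Set V}

lemma SimpleGraph.IsBipartiteWith.card_bipartiteLabel_add_of_adj (h : G.IsBipartiteWith s t)
    (hadj : G.Adj u v) : #(bipartiteLabel s idx n k u + bipartiteLabel s idx n k v) = k := by
  rcases h.mem_of_adj hadj with ⟨hu, hv⟩ | ⟨hu, hv⟩
  · rw [bipartiteLabel_add_bipartiteLabel hu (Set.disjoint_right.1 h.disjoint hv)]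
    simp
  · rw [add_comm, bipartiteLabel_add_bipartiteLabel hv (Set.disjoint_right.1 h.disjoint hu)]
    simp

lemma SimpleGraph.IsBipartiteWith.injOn_edgeSum_bipartiteLabel (h : G.IsBipartiteWith s t)
    (hidx : Function.Injective idx) (hn : ∀ v, idx v < n) (hk : 0 < k) :
    Set.InjOn (edgeSum (bipartiteLabel s idx n k)) G.edgeSet := by
  intro e he e' he' heq
  obtain ⟨u, hu, v, hv, rfl⟩ := h.exists_eq_mk_of_mem_edgeSet he
  obtain ⟨u', hu', v', hv', rfl⟩ := h.exists_eq_mk_of_mem_edgeSet he'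
  have hsum : idx v + n * (idx u + 1) = idx v' + n * (idx u' + 1) := by
    refine Nat.Ico_add_injective hk ?_
    simpa only [edgeSum, Sym2.lift_mk, bipartiteLabel_add_bipartiteLabel hu
      (Set.disjoint_right.1 h.disjoint hv), bipartiteLabel_add_bipartiteLabel hu'
      (Set.disjoint_right.1 h.disjoint hv')] using heq
  obtain ⟨hu_eq, hv_eq⟩ := Nat.eq_and_eq_of_add_mul_eq_add_mul (hn v) (hn v') hsum
  rw [hidx (Nat.succ_injective hu_eq), hidx hv_eq]

end BipartiteLabel

theorem SimpleGraph.IsBipartite.exists_isWeaklyUniformIASI {V : Type*} [Finite V]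
    {G : SimpleGraph V} (hG : G.IsBipartite) {k : ℕ} (hk : 0 < k) :
    ∃ f : V → Finset ℕ, IsWeaklyUniformIASI G f k := by
  classical
  obtain ⟨s, t, hst⟩ := hG.exists_isBipartiteWith
  obtain ⟨n, ⟨e⟩⟩ := Finite.exists_equiv_fin V
  have hidx : Function.Injective fun v => (e v : ℕ) := Fin.val_injective.comp e.injective
  have hn : ∀ v, (e v : ℕ) < n := fun v => (e v).isLt
  exact ⟨bipartiteLabel s (fun v => e v) n k,
    ⟨⟨bipartiteLabel_injective hidx hn hk, bipartiteLabel_nonempty hk,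
      hst.injOn_edgeSum_bipartiteLabel hidx hn hk⟩,
      fun _ _ => hst.card_bipartiteLabel_add_of_adj⟩,
    card_bipartiteLabel⟩

theorem tree_weakly_uniform_IASI {V : Type*} [Fintype V] (G : SimpleGraph V)
    (hG : G.IsTree) (k : ℕ) (hk : 0 < k) :
    ∃ f : V → Finset ℕ, IsWeaklyUniformIASI G f k :=
  hG.isBipartite.exists_isWeaklyUniformIASI hk
end

section
/- Every even cycle C_{2n} admits a weakly k-uniform integer additive set-indexer for every positive integer k. -/
open Pointwise

/-!
Label each vertex `v` by an interval `[a v, a v + d v]`. Since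
`[a, a + d] + [b, b + e] = [a + b, a + b + d + e]`, the labeling is `k`-uniform as soon as
`d u + d v + 1 = k` along every edge, and injective on edges as soon as the sums `a u + a v`
tell the edges apart.

On `C_N` with `N` even, edges join vertices of opposite parity, so `d = 0` on even and
`d = k - 1` on odd vertices works. For `a` take the identity, except `a (N - 1) = 2N`: the path
edges `{i, i + 1}` then have the distinct odd sums `2i + 1 < 2N`, and the closing edges
`{N - 1, 0}`, `{N - 2, N - 1}` the sums `2N` and `3N - 2`. Without the move, `{N - 1, 0}` would
share the sum `N - 1` with `{N/2 - 1, N/2}`.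
-/

theorem Finset.eq_of_Icc_eq_Icc {α : Type*} [PartialOrder α] [LocallyFiniteOrder α]
    {a b c d : α} (hab : a ≤ b) (h : Icc a b = Icc c d) : a = c := by
  have ha : a ∈ Icc c d := h ▸ left_mem_Icc.2 hab
  have hc : c ∈ Icc a b := h ▸ left_mem_Icc.2 ((mem_Icc.1 ha).1.trans (mem_Icc.1 ha).2)
  exact le_antisymm (mem_Icc.1 hc).1 (mem_Icc.1 ha).1

theorem Nat.Icc_add_Icc {a b c d : ℕ} (hab : a ≤ b) (hcd : c ≤ d) :
    Finset.Icc a b + Finset.Icc c d = Finset.Icc (a + c) (b + d) := by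
  ext x
  simp only [Finset.mem_add, Finset.mem_Icc]
  constructor
  · rintro ⟨y, hy, z, hz, rfl⟩
    omega
  · intro hx
    exact ⟨min b (max a (x - d)), by omega, x - min b (max a (x - d)), by omega, by omega⟩

section IntervalLabel

variable {V : Type*}

def intervalLabel (a d : V → ℕ) (v : V) : Finset ℕ :=
  Finset.Icc (a v) (a v + d v)

theorem card_intervalLabel (a d : V → ℕ) (v : V) : (intervalLabel a d v).card = d v + 1 := by
  simp only [intervalLabel, Nat.card_Icc]
  omega

theorem intervalLabel_add_intervalLabel (a d : V → ℕ) (u v : V) :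
    intervalLabel a d u + intervalLabel a d v =
      Finset.Icc (a u + a v) (a u + a v + (d u + d v)) := by
  rw [intervalLabel, intervalLabel, Nat.Icc_add_Icc (by omega) (by omega)]
  congr 1
  ring

theorem intervalLabel_injective {a : V → ℕ} (ha : Function.Injective a) (d : V → ℕ) :
    Function.Injective (intervalLabel a d) :=
  fun _ _ h => ha (Finset.eq_of_Icc_eq_Icc (Nat.le_add_right _ _) h)

theorem isUniformIASI_intervalLabel (G : SimpleGraph V) {a d : V → ℕ} {k : ℕ}
    (ha : Function.Injective a) (hd : ∀ u v, G.Adj u v → d u + d v + 1 = k)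
    (ha_edge : ∀ u v x y, G.Adj u v → G.Adj x y → a u + a v = a x + a y →
      s(u, v) = s(x, y)) :
    IsUniformIASI G (intervalLabel a d) k := by
  refine ⟨⟨intervalLabel_injective ha d, fun v => Finset.nonempty_Icc.2 (Nat.le_add_right _ _),
    ?_⟩, ?_⟩
  · intro e₁ he₁ e₂ he₂ h
    induction e₁ using Sym2.ind with | _ u v =>
    induction e₂ using Sym2.ind with | _ x y =>
    simp only [edgeSum, Sym2.lift_mk, intervalLabel_add_intervalLabel] at h
    exact ha_edge u v x y he₁ he₂ (Finset.eq_of_Icc_eq_Icc (Nat.le_add_right _ _) h)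
  · intro u v huv
    rw [intervalLabel_add_intervalLabel, Nat.card_Icc, ← hd u v huv]
    omega

theorem isWeaklyUniformIASI_intervalLabel (G : SimpleGraph V) {a d : V → ℕ} {k : ℕ}
    (ha : Function.Injective a) (hd : ∀ u v, G.Adj u v → d u + d v + 1 = k)
    (ha_edge : ∀ u v x y, G.Adj u v → G.Adj x y → a u + a v = a x + a y →
      s(u, v) = s(x, y))
    (hd_vertex : ∀ v, d v = 0 ∨ d v + 1 = k) :
    IsWeaklyUniformIASI G (intervalLabel a d) k := by
  refine ⟨isUniformIASI_intervalLabel G ha hd ha_edge, fun v => ?_⟩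
  rw [card_intervalLabel]
  have := hd_vertex v
  omega

end IntervalLabel

namespace SimpleGraph

theorem cycleGraph_adj_val {N : ℕ} {u v : Fin N} (h : (cycleGraph N).Adj u v) :
    u.val + 1 = v.val ∨ v.val + 1 = u.val ∨
      (u.val + 1 = N ∧ v.val = 0) ∨ (v.val + 1 = N ∧ u.val = 0) := by
  have hu := u.isLt
  have hv := v.isLt
  have hne : u ≠ v := h.ne
  rcases cycleGraph_adj'.1 h with h | h <;> rcases le_or_gt v u with huv | huv
  · rw [Fin.coe_sub_iff_le.2 huv] at h; omega
  · rw [Fin.coe_sub_iff_lt.2 huv] at h; omega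
  · rw [Fin.coe_sub_iff_lt.2 (huv.lt_of_ne hne.symm)] at h; omega
  · rw [Fin.coe_sub_iff_le.2 huv.le] at h; omega

theorem cycleGraph_adj_mod_two_ne {N : ℕ} (hN : Even N) {u v : Fin N}
    (h : (cycleGraph N).Adj u v) : u.val % 2 ≠ v.val % 2 := by
  obtain ⟨m, rfl⟩ := hN
  rcases cycleGraph_adj_val h with h | h | h | h <;> omega

end SimpleGraph

def cycleBase {N : ℕ} (v : Fin N) : ℕ :=
  if v.val + 1 = N then 2 * N else v.val

theorem cycleBase_injective {N : ℕ} : Function.Injective (cycleBase (N := N)) := by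
  intro u v h
  have hu := u.isLt
  have hv := v.isLt
  unfold cycleBase at h
  ext
  split_ifs at h <;> omega

theorem eq_of_cycleBase_add_cycleBase_eq {N : ℕ} {u v x y : Fin N}
    (huv : (SimpleGraph.cycleGraph N).Adj u v) (hxy : (SimpleGraph.cycleGraph N).Adj x y)
    (h : cycleBase u + cycleBase v = cycleBase x + cycleBase y) : s(u, v) = s(x, y) := by
  have := u.isLt; have := v.isLt; have := x.isLt; have := y.isLt
  unfold cycleBase at h
  simp only [Sym2.eq_iff, Fin.ext_iff]
  rcases SimpleGraph.cycleGraph_adj_val huv with h₁ | h₁ | h₁ | h₁ <;>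
  rcases SimpleGraph.cycleGraph_adj_val hxy with h₂ | h₂ | h₂ | h₂ <;>
  split_ifs at h <;> omega

theorem even_cycle_weakly_uniform_IASI_general (n : ℕ) (k : ℕ) (hk : 0 < k) :
    ∃ f : Fin (2 * n) → Finset ℕ, IsWeaklyUniformIASI (SimpleGraph.cycleGraph (2 * n)) f k := by
  refine ⟨intervalLabel cycleBase (fun v => if v.val % 2 = 0 then 0 else k - 1),
    isWeaklyUniformIASI_intervalLabel _ cycleBase_injective (fun u v huv => ?_)
      (fun _ _ _ _ => eq_of_cycleBase_add_cycleBase_eq) (fun v => ?_)⟩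
  · have hpar := SimpleGraph.cycleGraph_adj_mod_two_ne (even_two_mul n) huv
    split_ifs <;> omega
  · split_ifs <;> omega

theorem even_cycle_weakly_uniform_IASI (n : ℕ) (hn : 2 ≤ n) (k : ℕ) (hk : 0 < k) :
    ∃ f : Fin (2 * n) → Finset ℕ, IsWeaklyUniformIASI (SimpleGraph.cycleGraph (2 * n)) f k :=
  even_cycle_weakly_uniform_IASI_general n k hk
end

section
/- For k > 1, no odd cycle C_{2m+1} admits a weakly k-uniform integer additive set-indexer. -/
open Pointwise

/-!
In a weakly `k`-uniform IASI with `k > 1`, the two ends of an edge cannot both carry singletons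
(their sumset would be a singleton), nor both carry `k`-sets (by Cauchy–Davenport their sumset
would have at least `2k - 1 > k` elements). So "the label is a singleton" properly 2-colours the
graph, which is impossible for an odd cycle.
-/

open Finset SimpleGraph

theorem Finset.card_eq_one_iff_card_ne_one_of_card_add_eq {α : Type*} [LinearOrder α] [Add α]
    [IsCancelAdd α] [AddLeftMono α] [AddRightMono α] {s t : Finset α} {k : ℕ}
    (hk : 1 < k) (hs : s.Nonempty) (ht : t.Nonempty)
    (hs_card : #s = 1 ∨ #s = k) (ht_card : #t = 1 ∨ #t = k) (hst : #(s + t) = k) :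
    #s = 1 ↔ #t ≠ 1 := by
  have upper : #(s + t) ≤ #s * #t := card_add_le
  have lower : #s + #t - 1 ≤ #(s + t) := cauchy_davenport_add_of_linearOrder_isCancelAdd hs ht
  rw [hst] at upper lower
  rcases hs_card with hs_card | hs_card <;> rcases ht_card with ht_card | ht_card <;>
    rw [hs_card, ht_card] at upper lower <;> omega

namespace IsWeaklyUniformIASI

variable {V : Type*} {G : SimpleGraph V} {f : V → Finset ℕ} {k : ℕ}

def singletonColoring (hf : IsWeaklyUniformIASI G f k) (hk : 1 < k) : G.Coloring Bool :=
  Coloring.mk (fun v => decide (#(f v) = 1)) fun {u v} huv => by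
    have h := card_eq_one_iff_card_ne_one_of_card_add_eq hk (hf.1.1.2.1 u) (hf.1.1.2.1 v)
      (hf.2 u) (hf.2 v) (hf.1.2 u v huv)
    by_cases hu : #(f u) = 1 <;> simp_all

theorem colorable_two (hf : IsWeaklyUniformIASI G f k) (hk : 1 < k) : G.Colorable 2 :=
  (hf.singletonColoring hk).colorable

end IsWeaklyUniformIASI

theorem odd_cycle_no_weakly_uniform_IASI (m : ℕ) (hm : 1 ≤ m) (k : ℕ) (hk : 1 < k) :
    ¬ ∃ f : Fin (2 * m + 1) → Finset ℕ,
      IsWeaklyUniformIASI (SimpleGraph.cycleGraph (2 * m + 1)) f k := by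
  rintro ⟨f, hf⟩
  have h_three : (cycleGraph (2 * m + 1)).chromaticNumber = 3 :=
    chromaticNumber_cycleGraph_of_odd _ (by omega) (odd_two_mul_add_one m)
  have h_two := (hf.colorable_two hk).chromaticNumber_le
  rw [h_three] at h_two
  exact absurd h_two (by norm_num)
end

section
/- For every positive odd integer k, the complete graph K_n admits a k-uniform integer additive set-indexer. -/
open Pointwise

/-!
Write `k = 2m - 1` and label vertex `i` by the interval `[2^i, 2^i + m)`. The sumset of two
intervals of length `m` is an interval of length `2m - 1`, so every edge label has `k` elements,
and its least element `2^i + 2^j` recovers `{i, j}` by uniqueness of binary expansions.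
-/

open Finset

theorem Nat.Ico_add_Ico {m n : ℕ} (hm : 0 < m) (hn : 0 < n) (a b : ℕ) :
    Ico a (a + m) + Ico b (b + n) = Ico (a + b) (a + b + (m + n - 1)) := by
  ext x
  simp only [mem_add, mem_Ico]
  constructor
  · rintro ⟨y, hy, z, hz, rfl⟩
    omega
  · intro hx
    exact ⟨a + min (x - (a + b)) (m - 1), by omega, x - a - min (x - (a + b)) (m - 1), by omega,
      by omega⟩

theorem Nat.Ico_self_add_injective {m : ℕ} (hm : 0 < m) :
    Function.Injective fun a : ℕ ↦ Ico a (a + m) := by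
  intro a b h
  simp only [Finset.ext_iff, mem_Ico] at h
  have := h a
  have := h b
  omega

theorem sym2_eq_of_pow_add_pow_eq {n a b c d : ℕ} (hn : 2 ≤ n) (hab : a ≠ b) (hcd : c ≠ d)
    (h : n ^ a + n ^ b = n ^ c + n ^ d) : s(a, b) = s(c, d) := by
  have hpair : ({a, b} : Finset ℕ) = {c, d} :=
    geomSum_injective hn (by simpa only [sum_pair hab, sum_pair hcd])
  rw [← coe_inj, coe_pair, coe_pair, Set.pair_eq_pair_iff] at hpair
  exact Sym2.eq_iff.mpr hpair

theorem isUniformIASI_Ico {V : Type*} (G : SimpleGraph V) {a : V → ℕ}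
    (ha : Function.Injective a)
    (hsum : ∀ u v x y, G.Adj u v → G.Adj x y → a u + a v = a x + a y → s(u, v) = s(x, y))
    {m : ℕ} (hm : 0 < m) :
    IsUniformIASI G (fun v ↦ Ico (a v) (a v + m)) (2 * m - 1) := by
  have hlabel (u v : V) :
      Ico (a u) (a u + m) + Ico (a v) (a v + m) = Ico (a u + a v) (a u + a v + (2 * m - 1)) := by
    rw [Nat.Ico_add_Ico hm hm, two_mul]
  refine ⟨⟨(Nat.Ico_self_add_injective hm).comp ha, fun v ↦ nonempty_Ico.mpr (by omega), ?_⟩,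
    fun u v _ ↦ by rw [hlabel, Nat.card_Ico, Nat.add_sub_cancel_left]⟩
  rintro ⟨u, v⟩ huv ⟨x, y⟩ hxy h
  simp only [edgeSum, Sym2.lift_mk, hlabel] at h
  exact hsum u v x y huv hxy (Nat.Ico_self_add_injective (by omega) h)

theorem complete_uniform_IASI_of_odd_general (n k : ℕ) (hk : Odd k) :
    ∃ f : Fin n → Finset ℕ, IsUniformIASI (⊤ : SimpleGraph (Fin n)) f k := by
  obtain ⟨m, rfl⟩ := hk
  rw [show 2 * m + 1 = 2 * (m + 1) - 1 by omega]
  refine ⟨_, isUniformIASI_Ico ⊤ ((Nat.pow_right_injective le_rfl).comp Fin.val_injective) ?_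
    m.succ_pos⟩
  intro u v x y huv hxy h
  have := sym2_eq_of_pow_add_pow_eq le_rfl (Fin.val_ne_of_ne huv) (Fin.val_ne_of_ne hxy) h
  exact Sym2.map.injective Fin.val_injective (by simpa using this)

theorem complete_uniform_IASI_of_odd (n k : ℕ) (hk : Odd k) (hk0 : 0 < k) :
    ∃ f : Fin n → Finset ℕ, IsUniformIASI (⊤ : SimpleGraph (Fin n)) f k :=
  complete_uniform_IASI_of_odd_general n k hk
end
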